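/- Suppose (X_i,κ_i) and (Y_i,λ_i) have the same real homotopy type for 1≤i≤v. Then (Π_{i=1}^v X_i, NP_v(κ_1,…,κ_v)) and (Π_{i=1}^v Y_i, NP_v(λ_1,…,λ_v)) have the same real homotopy type. If the real homotopy equivalences X_i ≃^ℝ Y_i are all pointed with respect to x_i ∈ X_i and y_i ∈ Y_i, then the real homotopy equivalence of the products is pointed with respect to (x_1,…,x_v) and (y_1,…,y_v). -/
import Mathlib


/-- `(κ,λ)`-continuity: adjacent points have equal or adjacent images. -/
def DContinuous {X Y : Type*} (κ : X → X → Prop) (lam : Y → Y → Prop)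
    (f : X → Y) : Prop :=
  ∀ x x', κ x x' → f x = f x' ∨ lam (f x) (f x')

/-- The normal product adjacency `NP_v(κ_1,…,κ_v)` on a finite product of digital images. -/
def NP {v : ℕ} {X : Fin v → Type*} (κ : ∀ i, X i → X i → Prop)
    (p q : ∀ i, X i) : Prop :=
  p ≠ q ∧ ∀ i, p i = q i ∨ κ i (p i) (q i)

/-- `f : [0,1] → X` is a real `κ`-path in `X`. -/
def IsRealPath {X : Type*} (κ : X → X → Prop) (f : ℝ → X) : Prop :=
  (∃ ε > (0:ℝ), ∃ c : X, (∀ s ∈ Set.Ioo (0:ℝ) ε, f s = c) ∧ (c = f 0 ∨ κ c (f 0))) ∧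
  (∀ t ∈ Set.Ioo (0:ℝ) 1, ∃ ε > (0:ℝ), ∃ c₁ c₂ : X,
      (∀ s ∈ Set.Ioo (t - ε) t, f s = c₁) ∧ (∀ s ∈ Set.Ioo t (t + ε), f s = c₂) ∧
      (c₁ = c₂ ∨ κ c₁ c₂) ∧ (c₁ = f t ∨ c₂ = f t)) ∧
  (∃ ε > (0:ℝ), ∃ c : X, (∀ s ∈ Set.Ioo (1 - ε) (1:ℝ), f s = c) ∧ (c = f 1 ∨ κ c (f 1)))

/-- `H : X × [0,1] → Y` is a real homotopy from `f` to `g`. -/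
def IsRealHomotopy {X Y : Type*} (κ : X → X → Prop) (lam : Y → Y → Prop)
    (f g : X → Y) (H : X → ℝ → Y) : Prop :=
  (∀ x, H x 0 = f x) ∧ (∀ x, H x 1 = g x) ∧
  (∀ x, IsRealPath lam (H x)) ∧
  (∀ t ∈ Set.Icc (0:ℝ) 1, ∀ x x', κ x x' → H x t = H x' t ∨ lam (H x t) (H x' t))

/-- `(X,κ)` and `(Y,λ)` have the same real homotopy type. -/
def RealHtpyEquiv {X Y : Type*} (κ : X → X → Prop) (lam : Y → Y → Prop) : Prop :=
  ∃ (f : X → Y) (g : Y → X), DContinuous κ lam f ∧ DContinuous lam κ g ∧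
    (∃ H, IsRealHomotopy κ κ (fun x => g (f x)) id H) ∧
    (∃ H, IsRealHomotopy lam lam (fun y => f (g y)) id H)

/-- Pointed real homotopy equivalence with respect to `x₀ ∈ X` and `y₀ ∈ Y`. -/
def PtdRealHtpyEquiv {X Y : Type*} (κ : X → X → Prop) (lam : Y → Y → Prop)
    (x₀ : X) (y₀ : Y) : Prop :=
  ∃ (f : X → Y) (g : Y → X), DContinuous κ lam f ∧ DContinuous lam κ g ∧
    f x₀ = y₀ ∧ g y₀ = x₀ ∧
    (∃ H, IsRealHomotopy κ κ (fun x => g (f x)) id H ∧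
        ∀ t ∈ Set.Icc (0:ℝ) 1, H x₀ t = x₀) ∧
    (∃ H, IsRealHomotopy lam lam (fun y => f (g y)) id H ∧
        ∀ t ∈ Set.Icc (0:ℝ) 1, H y₀ t = y₀)

noncomputable def Gaux {X : Type*} (F : X → X) (H : X → ℝ → X) (x : X) (s : ℝ) : X :=
  if s ≤ 1/3 then F x else if 2/3 ≤ s then x else H x (3*s - 1)

lemma Gaux_left {X : Type*} (F : X → X) (H : X → ℝ → X) (x : X) {s : ℝ}
    (h : s ≤ 1/3) : Gaux F H x s = F x := by
  unfold Gaux; rw [if_pos h]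

lemma Gaux_right {X : Type*} (F : X → X) (H : X → ℝ → X) (x : X) {s : ℝ}
    (h : 2/3 ≤ s) : Gaux F H x s = x := by
  unfold Gaux; rw [if_neg (by linarith), if_pos h]

lemma Gaux_mid {X : Type*} (F : X → X) (H : X → ℝ → X) (x : X) {s : ℝ}
    (h1 : 1/3 < s) (h2 : s < 2/3) : Gaux F H x s = H x (3*s - 1) := by
  unfold Gaux; rw [if_neg (by linarith), if_neg (by linarith)]

lemma Gaux_cont {X : Type*} (κ : X → X → Prop) (F : X → X) (H : X → ℝ → X)
    (hH : IsRealHomotopy κ κ F id H) (s : ℝ) (x x' : X) (h : κ x x') :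
    Gaux F H x s = Gaux F H x' s ∨ κ (Gaux F H x s) (Gaux F H x' s) := by
  rcases le_or_gt s (1/3) with h1 | h1
  · rw [Gaux_left _ _ _ h1, Gaux_left _ _ _ h1]
    have h2 := hH.2.2.2 0 ⟨le_rfl, by norm_num⟩ x x' h
    rwa [hH.1 x, hH.1 x'] at h2
  · rcases le_or_gt (2/3) s with h2 | h2
    · rw [Gaux_right _ _ _ h2, Gaux_right _ _ _ h2]; exact Or.inr h
    · rw [Gaux_mid _ _ _ h1 h2, Gaux_mid _ _ _ h1 h2]
      exact hH.2.2.2 (3*s-1) ⟨by linarith, by linarith⟩ x x' h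

lemma Gaux_path {X : Type*} (κ : X → X → Prop) (hκs : ∀ x y, κ x y → κ y x)
    (F : X → X) (H : X → ℝ → X) (hH : IsRealHomotopy κ κ F id H) (x : X) (s : ℝ) :
    ∃ ε > (0:ℝ), ∃ c₁ c₂ : X,
      (∀ u ∈ Set.Ioo (s - ε) s, Gaux F H x u = c₁) ∧
      (∀ u ∈ Set.Ioo s (s + ε), Gaux F H x u = c₂) ∧
      (c₁ = c₂ ∨ κ c₁ c₂) ∧ (c₁ = Gaux F H x s ∨ c₂ = Gaux F H x s) ∧
      (¬(1/3 ≤ s ∧ s ≤ 2/3) → c₁ = Gaux F H x s ∧ c₂ = Gaux F H x s) := by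
  rcases lt_trichotomy s (1/3) with h | h | h
  · have hv : Gaux F H x s = F x := Gaux_left _ _ _ h.le
    refine ⟨1/3 - s, by linarith, F x, F x, ?_, ?_, Or.inl rfl, Or.inl hv.symm,
      fun _ => ⟨hv.symm, hv.symm⟩⟩
    · intro u hu; exact Gaux_left _ _ _ (by rcases hu with ⟨h1, h2⟩; linarith)
    · intro u hu; exact Gaux_left _ _ _ (by rcases hu with ⟨h1, h2⟩; linarith)
  · subst h
    obtain ⟨ε₀, hε₀, c, hc, hc0⟩ := (hH.2.2.1 x).1
    have hmin1 := min_le_left ε₀ 1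
    have hmin2 := min_le_right ε₀ 1
    have hminpos : (0:ℝ) < min ε₀ 1 := lt_min hε₀ one_pos
    refine ⟨min ε₀ 1 / 3, by linarith, F x, c, ?_, ?_, ?_, Or.inl (Gaux_left _ _ _ le_rfl).symm,
      fun hcon => absurd ⟨le_rfl, by norm_num⟩ hcon⟩
    · intro u hu; exact Gaux_left _ _ _ hu.2.le
    · intro u hu
      rcases hu with ⟨h1, h2⟩
      rw [Gaux_mid _ _ _ (by linarith) (by linarith)]
      exact hc _ ⟨by linarith, by linarith⟩
    · rw [hH.1 x] at hc0
      rcases hc0 with h' | h'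
      · exact Or.inl h'.symm
      · exact Or.inr (hκs _ _ h')
  · rcases lt_trichotomy s (2/3) with h2 | h2 | h2
    · obtain ⟨ε₀, hε₀, c₁, c₂, hc1, hc2, hadj, hval⟩ :=
        (hH.2.2.1 x).2.1 (3*s - 1) ⟨by linarith, by linarith⟩
      set ε := min (ε₀/3) (min (s - 1/3) (2/3 - s)) with hε
      have he1 : ε ≤ ε₀/3 := min_le_left _ _
      have he2 : ε ≤ s - 1/3 := le_trans (min_le_right _ _) (min_le_left _ _)
      have he3 : ε ≤ 2/3 - s := le_trans (min_le_right _ _) (min_le_right _ _)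
      have hεpos : 0 < ε := lt_min (by linarith) (lt_min (by linarith) (by linarith))
      refine ⟨ε, hεpos, c₁, c₂, ?_, ?_, hadj, ?_, fun hcon => absurd ⟨h.le, h2.le⟩ hcon⟩
      · intro u hu; rcases hu with ⟨hu1, hu2⟩
        rw [Gaux_mid _ _ _ (by linarith) (by linarith)]
        exact hc1 _ ⟨by linarith, by linarith⟩
      · intro u hu; rcases hu with ⟨hu1, hu2⟩
        rw [Gaux_mid _ _ _ (by linarith) (by linarith)]
        exact hc2 _ ⟨by linarith, by linarith⟩
      · rw [Gaux_mid _ _ _ h h2]; exact hval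
    · subst h2
      obtain ⟨ε₁, hε₁, c, hc, hc1⟩ := (hH.2.2.1 x).2.2
      have hmin1 := min_le_left ε₁ 1
      have hmin2 := min_le_right ε₁ 1
      have hminpos : (0:ℝ) < min ε₁ 1 := lt_min hε₁ one_pos
      refine ⟨min ε₁ 1 / 3, by linarith, c, x, ?_, ?_, ?_,
        Or.inr (Gaux_right _ _ _ le_rfl).symm,
        fun hcon => absurd ⟨by norm_num, le_rfl⟩ hcon⟩
      · intro u hu; rcases hu with ⟨h1', h2'⟩
        rw [Gaux_mid _ _ _ (by linarith) (by linarith)]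
        exact hc _ ⟨by linarith, by linarith⟩
      · intro u hu; exact Gaux_right _ _ _ hu.1.le
      · have hx : H x 1 = x := hH.2.1 x
        rw [hx] at hc1; exact hc1
    · have hv : Gaux F H x s = x := Gaux_right _ _ _ h2.le
      refine ⟨s - 2/3, by linarith, x, x, ?_, ?_, Or.inl rfl, Or.inl hv.symm,
        fun _ => ⟨hv.symm, hv.symm⟩⟩
      · intro u hu; exact Gaux_right _ _ _ (by rcases hu with ⟨h1, h2'⟩; linarith)
      · intro u hu; exact Gaux_right _ _ _ (by rcases hu with ⟨h1, h2'⟩; linarith)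

lemma exists_pos_min {v : ℕ} (E : Fin v → ℝ) (hE : ∀ i, 0 < E i) :
    ∃ ε > (0:ℝ), ∀ i, ε ≤ E i := by
  rcases isEmpty_or_nonempty (Fin v) with h | h
  · exact ⟨1, one_pos, fun i => (h.false i).elim⟩
  · obtain ⟨i₀, -, hi₀⟩ := Finset.exists_min_image Finset.univ E
      ⟨Classical.arbitrary _, Finset.mem_univ _⟩
    exact ⟨E i₀, hE i₀, fun i => hi₀ i (Finset.mem_univ i)⟩

lemma key {v : ℕ} {X : Fin v → Type*} (κ : ∀ i, X i → X i → Prop)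
    (hκs : ∀ i x y, κ i x y → κ i y x)
    (F : ∀ i, X i → X i) (H : ∀ i, X i → ℝ → X i)
    (hH : ∀ i, IsRealHomotopy (κ i) (κ i) (F i) id (H i)) :
    ∃ K : (∀ i, X i) → ℝ → (∀ i, X i),
      IsRealHomotopy (NP κ) (NP κ) (fun p i => F i (p i)) id K ∧
      ∀ x₀ : ∀ i, X i, (∀ i, ∀ t ∈ Set.Icc (0:ℝ) 1, H i (x₀ i) t = x₀ i) →
        ∀ t ∈ Set.Icc (0:ℝ) 1, K x₀ t = x₀ := by
  classical
  refine ⟨fun p t i => Gaux (F i) (H i) (p i) ((v:ℝ)*t - ((i:ℕ):ℝ)), ⟨?_, ?_, ?_, ?_⟩, ?_⟩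
  · -- K p 0 = F p
    intro p; funext i
    exact Gaux_left _ _ _ (by have : (0:ℝ) ≤ ((i:ℕ):ℝ) := Nat.cast_nonneg _; linarith)
  · -- K p 1 = p
    intro p; funext i
    have hi : ((i:ℕ):ℝ) + 1 ≤ (v:ℝ) := by exact_mod_cast Nat.succ_le_of_lt i.isLt
    exact Gaux_right _ _ _ (by linarith)
  · -- real path
    intro p
    refine ⟨?_, ?_, ?_⟩
    · -- start
      obtain ⟨ε, hε, hεle⟩ := exists_pos_min (fun i : Fin v => 1/(3*(v:ℝ)))
        (fun i => by
          have hv : (0:ℝ) < (v:ℝ) := by exact_mod_cast i.pos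
          have : (0:ℝ) < 3*(v:ℝ) := by linarith
          exact one_div_pos.mpr this)
      refine ⟨ε, hε, (fun i => F i (p i)), ?_, Or.inl ?_⟩
      · intro s hs; funext i
        have hv : (0:ℝ) < (v:ℝ) := by exact_mod_cast i.pos
        apply Gaux_left
        have h1 : (v:ℝ)*s ≤ (v:ℝ)*(1/(3*(v:ℝ))) :=
          mul_le_mul_of_nonneg_left (hs.2.le.trans (hεle i)) hv.le
        have h2 : (v:ℝ)*(1/(3*(v:ℝ))) = 1/3 := by field_simp
        have h3 : (0:ℝ) ≤ ((i:ℕ):ℝ) := Nat.cast_nonneg _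
        linarith
      · funext i
        exact (Gaux_left _ _ _ (by have : (0:ℝ) ≤ ((i:ℕ):ℝ) := Nat.cast_nonneg _; linarith)).symm
    · -- middle
      intro t ht
      have main : ∀ i : Fin v, ∃ ε > (0:ℝ), ∃ c₁ c₂ : X i,
          (∀ u ∈ Set.Ioo (t - ε) t, Gaux (F i) (H i) (p i) ((v:ℝ)*u - ((i:ℕ):ℝ)) = c₁) ∧
          (∀ u ∈ Set.Ioo t (t + ε), Gaux (F i) (H i) (p i) ((v:ℝ)*u - ((i:ℕ):ℝ)) = c₂) ∧
          (c₁ = c₂ ∨ κ i c₁ c₂) ∧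
          (c₁ = Gaux (F i) (H i) (p i) ((v:ℝ)*t - ((i:ℕ):ℝ)) ∨
            c₂ = Gaux (F i) (H i) (p i) ((v:ℝ)*t - ((i:ℕ):ℝ))) ∧
          (¬(1/3 ≤ (v:ℝ)*t - ((i:ℕ):ℝ) ∧ (v:ℝ)*t - ((i:ℕ):ℝ) ≤ 2/3) →
            c₁ = Gaux (F i) (H i) (p i) ((v:ℝ)*t - ((i:ℕ):ℝ)) ∧
            c₂ = Gaux (F i) (H i) (p i) ((v:ℝ)*t - ((i:ℕ):ℝ))) := by
        intro i
        have hv : (0:ℝ) < (v:ℝ) := by exact_mod_cast i.pos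
        obtain ⟨ε', hε', c₁, c₂, hL, hR, hadj, hval, hin⟩ :=
          Gaux_path (κ i) (hκs i) (F i) (H i) (hH i) (p i) ((v:ℝ)*t - ((i:ℕ):ℝ))
        have hdiv : (v:ℝ)*(ε'/(v:ℝ)) = ε' := by field_simp
        refine ⟨ε'/(v:ℝ), by positivity, c₁, c₂, ?_, ?_, hadj, hval, hin⟩
        · intro u hu
          apply hL
          constructor
          · have h1 := mul_lt_mul_of_pos_left hu.1 hv
            have h2 : (v:ℝ)*(t - ε'/(v:ℝ)) = (v:ℝ)*t - (v:ℝ)*(ε'/(v:ℝ)) := by ring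
            rw [h2, hdiv] at h1; linarith
          · have h1 := mul_lt_mul_of_pos_left hu.2 hv
            linarith
        · intro u hu
          apply hR
          constructor
          · have h1 := mul_lt_mul_of_pos_left hu.1 hv
            linarith
          · have h1 := mul_lt_mul_of_pos_left hu.2 hv
            have h2 : (v:ℝ)*(t + ε'/(v:ℝ)) = (v:ℝ)*t + (v:ℝ)*(ε'/(v:ℝ)) := by ring
            rw [h2, hdiv] at h1; linarith
      choose ε' hε' c₁ c₂ hL hR hadj hval hin using main
      obtain ⟨ε, hεpos, hεle⟩ := exists_pos_min ε' hε'
      refine ⟨ε, hεpos, (fun i => c₁ i), (fun i => c₂ i), ?_, ?_, ?_, ?_⟩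
      · intro u hu; funext i
        exact hL i u ⟨by have := hεle i; linarith [hu.1], hu.2⟩
      · intro u hu; funext i
        exact hR i u ⟨hu.1, by have := hεle i; linarith [hu.2]⟩
      · by_cases hc : (fun i => c₁ i) = (fun i => c₂ i)
        · exact Or.inl hc
        · exact Or.inr ⟨hc, fun i => hadj i⟩
      · by_cases h1 : (fun i => c₁ i) =
            (fun i => Gaux (F i) (H i) (p i) ((v:ℝ)*t - ((i:ℕ):ℝ)))
        · exact Or.inl h1
        · right
          obtain ⟨i₀, hi₀⟩ : ∃ i, c₁ i ≠ Gaux (F i) (H i) (p i) ((v:ℝ)*t - ((i:ℕ):ℝ)) := by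
            by_contra hno; push_neg at hno; exact h1 (funext hno)
          have hact : 1/3 ≤ (v:ℝ)*t - ((i₀:ℕ):ℝ) ∧ (v:ℝ)*t - ((i₀:ℕ):ℝ) ≤ 2/3 := by
            by_contra hcon; exact hi₀ (hin i₀ hcon).1
          have huniq : ∀ i j : Fin v,
              1/3 ≤ (v:ℝ)*t - ((i:ℕ):ℝ) → (v:ℝ)*t - ((i:ℕ):ℝ) ≤ 2/3 →
              1/3 ≤ (v:ℝ)*t - ((j:ℕ):ℝ) → (v:ℝ)*t - ((j:ℕ):ℝ) ≤ 2/3 → i = j := by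
            intro i j hi1 hi2 hj1 hj2
            have h1' : ((i:ℕ):ℝ) < ((j:ℕ):ℝ) + 1 := by linarith
            have h2' : ((j:ℕ):ℝ) < ((i:ℕ):ℝ) + 1 := by linarith
            have h1'' : (i:ℕ) < (j:ℕ) + 1 := by exact_mod_cast h1'
            have h2'' : (j:ℕ) < (i:ℕ) + 1 := by exact_mod_cast h2'
            exact Fin.ext (by omega)
          funext i
          by_cases hii : i = i₀
          · subst hii
            rcases hval i with h' | h'
            · exact absurd h' hi₀
            · exact h'
          · have hinact : ¬(1/3 ≤ (v:ℝ)*t - ((i:ℕ):ℝ) ∧ (v:ℝ)*t - ((i:ℕ):ℝ) ≤ 2/3) :=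
              fun hc => hii (huniq i i₀ hc.1 hc.2 hact.1 hact.2)
            exact (hin i hinact).2
    · -- end
      obtain ⟨ε, hε, hεle⟩ := exists_pos_min (fun i : Fin v => 1/(3*(v:ℝ)))
        (fun i => by
          have hv : (0:ℝ) < (v:ℝ) := by exact_mod_cast i.pos
          have : (0:ℝ) < 3*(v:ℝ) := by linarith
          exact one_div_pos.mpr this)
      have hend : ∀ i : Fin v, ∀ s : ℝ, 1 - ε < s →
          Gaux (F i) (H i) (p i) ((v:ℝ)*s - ((i:ℕ):ℝ)) = p i := by
        intro i s hs
        have hv : (0:ℝ) < (v:ℝ) := by exact_mod_cast i.pos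
        apply Gaux_right
        have hi : ((i:ℕ):ℝ) + 1 ≤ (v:ℝ) := by exact_mod_cast Nat.succ_le_of_lt i.isLt
        have h1 : (v:ℝ)*(1-ε) < (v:ℝ)*s := mul_lt_mul_of_pos_left hs hv
        have h2 : (v:ℝ)*ε ≤ (v:ℝ)*(1/(3*(v:ℝ))) := mul_le_mul_of_nonneg_left (hεle i) hv.le
        have h3 : (v:ℝ)*(1/(3*(v:ℝ))) = 1/3 := by field_simp
        have h4 : (v:ℝ)*(1-ε) = (v:ℝ) - (v:ℝ)*ε := by ring
        linarith
      refine ⟨ε, hε, p, ?_, Or.inl ?_⟩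
      · intro s hs; funext i; exact hend i s hs.1
      · funext i
        have hi : ((i:ℕ):ℝ) + 1 ≤ (v:ℝ) := by exact_mod_cast Nat.succ_le_of_lt i.isLt
        exact (Gaux_right _ _ _ (by linarith)).symm
  · -- continuity in p
    intro t ht p q hpq
    obtain ⟨hne, hco⟩ := hpq
    by_cases heq : (fun i => Gaux (F i) (H i) (p i) ((v:ℝ)*t - ((i:ℕ):ℝ))) =
        (fun i => Gaux (F i) (H i) (q i) ((v:ℝ)*t - ((i:ℕ):ℝ)))
    · exact Or.inl heq
    · refine Or.inr ⟨heq, fun i => ?_⟩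
      rcases hco i with e | a
      · exact Or.inl (congrArg (fun z => Gaux (F i) (H i) z ((v:ℝ)*t - ((i:ℕ):ℝ))) e)
      · exact Gaux_cont (κ i) (F i) (H i) (hH i) _ _ _ a
  · -- pointedness
    intro x₀ hpt t ht; funext i
    show Gaux (F i) (H i) (x₀ i) ((v:ℝ)*t - ((i:ℕ):ℝ)) = x₀ i
    rcases le_or_gt ((v:ℝ)*t - ((i:ℕ):ℝ)) (1/3) with h1 | h1
    · rw [Gaux_left _ _ _ h1, ← (hH i).1 (x₀ i)]
      exact hpt i 0 ⟨le_rfl, zero_le_one⟩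
    · rcases le_or_gt (2/3) ((v:ℝ)*t - ((i:ℕ):ℝ)) with h2 | h2
      · exact Gaux_right _ _ _ h2
      · rw [Gaux_mid _ _ _ h1 h2]
        exact hpt i _ ⟨by linarith, by linarith⟩

lemma NP_cont {v : ℕ} {X Y : Fin v → Type*} (κ : ∀ i, X i → X i → Prop)
    (lam : ∀ i, Y i → Y i → Prop) (f : ∀ i, X i → Y i)
    (hf : ∀ i, DContinuous (κ i) (lam i) (f i)) :
    DContinuous (NP κ) (NP lam) (fun p i => f i (p i)) := by
  intro p q hpq
  obtain ⟨hne, h⟩ := hpq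
  by_cases he : (fun i => f i (p i)) = fun i => f i (q i)
  · exact Or.inl he
  · exact Or.inr ⟨he, fun i => (h i).elim (fun e => Or.inl (congrArg (f i) e))
      (fun a => hf i _ _ a)⟩

/-- If `X_i ≃^ℝ Y_i` for all `i`, then the products have the same real
homotopy type with the normal product adjacencies; pointed real homotopy equivalences
yield a pointed real homotopy equivalence of the products, pointed at the tuples. -/
theorem stmt10 (v : ℕ) (X Y : Fin v → Type*)
    (κ : ∀ i, X i → X i → Prop) (lam : ∀ i, Y i → Y i → Prop)
    (hκi : ∀ i x, ¬ κ i x x) (hκs : ∀ i x y, κ i x y → κ i y x)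
    (hli : ∀ i y, ¬ lam i y y) (hls : ∀ i y y', lam i y y' → lam i y' y) :
    ((∀ i, RealHtpyEquiv (κ i) (lam i)) → RealHtpyEquiv (NP κ) (NP lam)) ∧
    (∀ (x₀ : ∀ i, X i) (y₀ : ∀ i, Y i),
      (∀ i, PtdRealHtpyEquiv (κ i) (lam i) (x₀ i) (y₀ i)) →
      PtdRealHtpyEquiv (NP κ) (NP lam) x₀ y₀) := by
  constructor
  · intro h
    choose f g hf hg h1 h2 using h
    choose H1 hH1 using h1
    choose H2 hH2 using h2
    obtain ⟨K1, hK1, -⟩ := key κ hκs (fun i x => g i (f i x)) H1 hH1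
    obtain ⟨K2, hK2, -⟩ := key lam hls (fun i y => f i (g i y)) H2 hH2
    exact ⟨fun p i => f i (p i), fun q i => g i (q i), NP_cont _ _ _ hf, NP_cont _ _ _ hg,
      ⟨K1, hK1⟩, ⟨K2, hK2⟩⟩
  · intro x₀ y₀ h
    choose f g hf hg hfx hgy h1 h2 using h
    choose H1 hH1 hH1p using h1
    choose H2 hH2 hH2p using h2
    obtain ⟨K1, hK1, hK1p⟩ := key κ hκs (fun i x => g i (f i x)) H1 hH1
    obtain ⟨K2, hK2, hK2p⟩ := key lam hls (fun i y => f i (g i y)) H2 hH2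
    exact ⟨fun p i => f i (p i), fun q i => g i (q i), NP_cont _ _ _ hf, NP_cont _ _ _ hg,
      funext fun i => hfx i, funext fun i => hgy i,
      ⟨K1, hK1, hK1p x₀ hH1p⟩, ⟨K2, hK2, hK2p y₀ hH2p⟩⟩
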